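/- Let u > 0, c₂₂ > 0, c₂₁ ∈ ℝ, γ > 0, with c₂₂ ≠ c₂₁u and c₂₂ > 2c₂₁u/(c₂₂−c₂₁u). If V₀ is a 2×2 complex matrix such that W(t)V₀ = V₀* W(t) for all t ∈ (0,∞), where W is the weight W(t) = e^{−tu} t^{c₂₂−1} [[γ t^{2c₂₁u/(c₂₁u−c₂₂)} + ((c₂₂−c₂₁u)(c₂₂−tu)/(2uc₂₂))², (c₂₂−c₂₁u)(c₂₂−tu)/(2uc₂₂)],[(c₂₂−c₂₁u)(c₂₂−tu)/(2uc₂₂), 1]], then V₀ is scalar. -/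

import Mathlib

/-!
Up to the positive factor `e^{-tu} t^{c₂₂-1}` the weight is `!![f, p; p, 1]` with `p` affine and
nonconstant and `f = γ t^α + p²`. Write `V₀ = !![a, b; c, d]`. The `(1, 0)` entry of
`W V₀ = V₀ᴴ W` reads `b̄ f + (d̄ - a) p - c = 0` on `(0, ∞)`; as `γ t^α + κ t²` with `γ, κ > 0`
is never affine in `t` (test at `t = 1, 2, 4, 8`), `b = 0`. The same entry at two values of `p`
then gives `c = 0` and `a = d̄`, and the `(1, 1)` entry shows that `d` is real.
-/

theorem eq_zero_of_forall_mul_rpow_add_sq_add_affine {α γ κ : ℝ} (hγ : 0 < γ) (hκ : 0 < κ)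
    {b A B : ℂ} (h : ∀ t : ℝ, 0 < t → b * ((γ * t ^ α + κ * t ^ 2 : ℝ) : ℂ) + A + B * t = 0) :
    b = 0 := by
  set r : ℝ := 2 ^ α
  have hdyadic (k : ℕ) : b * ((γ * r ^ k + κ * (2 ^ k) ^ 2 : ℝ) : ℂ) + A + B * 2 ^ k = 0 := by
    have := h (2 ^ k) (by positivity)
    rwa [← Real.rpow_pow_comm zero_le_two, Complex.ofReal_pow, Complex.ofReal_ofNat] at this
  by_contra hb
  -- the second difference `2 E₀ - 3 E₁ + E₂` kills the affine part
  have second_difference (k : ℕ) :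
      γ * r ^ k * ((r - 1) * (r - 2)) + 6 * (2 ^ k) ^ 2 * κ = 0 := by
    have hc : b * ((γ * r ^ k * ((r - 1) * (r - 2)) + 6 * (2 ^ k) ^ 2 * κ : ℝ) : ℂ) = 0 := by
      have h₀ := hdyadic k; have h₁ := hdyadic (k + 1); have h₂ := hdyadic (k + 2)
      push_cast at h₀ h₁ h₂ ⊢
      linear_combination 2 * h₀ - 3 * h₁ + h₂
    exact_mod_cast (mul_eq_zero.mp hc).resolve_left hb
  have h₀ := second_difference 0
  have hr : r = 4 := by
    have : κ * (r - 4) = 0 := by linear_combination (r * h₀ - second_difference 1) / 6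
    linarith [(mul_eq_zero.mp this).resolve_left hκ.ne']
  rw [hr] at h₀
  norm_num at h₀
  linarith

namespace Matrix

theorem mul_eq_conjTranspose_mul_of_smul {n 𝕜 : Type*} [Fintype n] [Field 𝕜] [Star 𝕜]
    {c : 𝕜} (hc : c ≠ 0) {M V : Matrix n n 𝕜} (h : (c • M) * V = Vᴴ * (c • M)) :
    M * V = Vᴴ * M := by
  rw [smul_mul_assoc, mul_smul_comm] at h
  exact smul_right_injective _ hc h

theorem row_one_of_mul_eq_conjTranspose_mul {f p : ℂ} {V : Matrix (Fin 2) (Fin 2) ℂ}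
    (h : !![f, p; p, 1] * V = Vᴴ * !![f, p; p, 1]) :
    p * V 0 0 + V 1 0 = star (V 0 1) * f + star (V 1 1) * p ∧
      p * V 0 1 + V 1 1 = star (V 0 1) * p + star (V 1 1) :=
  ⟨by simpa [mul_apply, Fin.sum_univ_two] using congrFun (congrFun h 1) 0,
    by simpa [mul_apply, Fin.sum_univ_two] using congrFun (congrFun h 1) 1⟩

theorem exists_eq_smul_one_of_mul_eq_conjTranspose_mul {V : Matrix (Fin 2) (Fin 2) ℂ}
    (hV : V 0 1 = 0) {f₁ f₂ p₁ p₂ : ℂ} (hp : p₁ ≠ p₂)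
    (h₁ : !![f₁, p₁; p₁, 1] * V = Vᴴ * !![f₁, p₁; p₁, 1])
    (h₂ : !![f₂, p₂; p₂, 1] * V = Vᴴ * !![f₂, p₂; p₂, 1]) :
    ∃ c : ℂ, V = c • (1 : Matrix (Fin 2) (Fin 2) ℂ) := by
  obtain ⟨h₁₀, h₁₁⟩ := row_one_of_mul_eq_conjTranspose_mul h₁
  have h₂₀ := (row_one_of_mul_eq_conjTranspose_mul h₂).1
  simp only [hV, star_zero, zero_mul, mul_zero, zero_add] at h₁₀ h₁₁ h₂₀
  have hconj : V 0 0 = star (V 1 1) := by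
    have : (p₁ - p₂) * (V 0 0 - star (V 1 1)) = 0 := by linear_combination h₁₀ - h₂₀
    exact sub_eq_zero.mp ((mul_eq_zero.mp this).resolve_left (sub_ne_zero.mpr hp))
  have hV₁₀ : V 1 0 = 0 := by linear_combination h₁₀ - p₁ * hconj
  have hdiag : V 0 0 = V 1 1 := hconj.trans h₁₁.symm
  refine ⟨V 0 0, ?_⟩
  ext i j
  fin_cases i <;> fin_cases j <;> simp [hV, hV₁₀, hdiag]

end Matrix

open Matrix

theorem vequ_weight_irreducible_general (u c₂₁ c₂₂ γ : ℝ)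
    (hu : 0 < u) (hc₂₂ : 0 < c₂₂) (hγ : 0 < γ)
    (hne : c₂₂ ≠ c₂₁ * u)
    (W : ℝ → Matrix (Fin 2) (Fin 2) ℂ)
    (hW : ∀ t : ℝ, W t =
      !![((Real.exp (-(t * u)) * t ^ (c₂₂ - 1) *
            (γ * t ^ (2 * c₂₁ * u / (c₂₁ * u - c₂₂)) +
              ((c₂₂ - c₂₁ * u) * (c₂₂ - t * u) / (2 * u * c₂₂)) ^ 2) : ℝ) : ℂ),
         ((Real.exp (-(t * u)) * t ^ (c₂₂ - 1) *
            ((c₂₂ - c₂₁ * u) * (c₂₂ - t * u) / (2 * u * c₂₂)) : ℝ) : ℂ);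
         ((Real.exp (-(t * u)) * t ^ (c₂₂ - 1) *
            ((c₂₂ - c₂₁ * u) * (c₂₂ - t * u) / (2 * u * c₂₂)) : ℝ) : ℂ),
         ((Real.exp (-(t * u)) * t ^ (c₂₂ - 1) : ℝ) : ℂ)])
    (V₀ : Matrix (Fin 2) (Fin 2) ℂ)
    (hV : ∀ t ∈ Set.Ioi (0 : ℝ), W t * V₀ = V₀ᴴ * W t) :
    ∃ c : ℂ, V₀ = c • (1 : Matrix (Fin 2) (Fin 2) ℂ) := by
  set α := 2 * c₂₁ * u / (c₂₁ * u - c₂₂)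
  set K := (c₂₂ - c₂₁ * u) / (2 * u * c₂₂)
  have hK : K ≠ 0 := div_ne_zero (sub_ne_zero.mpr hne) (by positivity)
  have hp (t : ℝ) : (c₂₂ - c₂₁ * u) * (c₂₂ - t * u) / (2 * u * c₂₂) = K * (c₂₂ - t * u) := by
    ring
  set M : ℝ → Matrix (Fin 2) (Fin 2) ℂ := fun t ↦
    !![((γ * t ^ α + (K * (c₂₂ - t * u)) ^ 2 : ℝ) : ℂ), ((K * (c₂₂ - t * u) : ℝ) : ℂ);
      ((K * (c₂₂ - t * u) : ℝ) : ℂ), 1]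
  have hM (t : ℝ) (ht : 0 < t) : M t * V₀ = V₀ᴴ * M t := by
    have hWM : W t = ((Real.exp (-(t * u)) * t ^ (c₂₂ - 1) : ℝ) : ℂ) • M t := by
      simp only [hW, hp, M, smul_of, smul_cons, smul_empty, smul_eq_mul, mul_one,
        Complex.ofReal_mul]
    refine mul_eq_conjTranspose_mul_of_smul ?_ (hWM ▸ hV t ht)
    exact Complex.ofReal_ne_zero.mpr (by positivity)
  have hV₀₁ : V₀ 0 1 = 0 := by
    refine star_eq_zero.mp (eq_zero_of_forall_mul_rpow_add_sq_add_affine (α := α) hγ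
      (sq_pos_of_ne_zero (mul_ne_zero hK hu.ne'))
      (A := star (V₀ 0 1) * (K * c₂₂) ^ 2 + (star (V₀ 1 1) - V₀ 0 0) * (K * c₂₂) - V₀ 1 0)
      (B := -2 * star (V₀ 0 1) * K ^ 2 * c₂₂ * u - (star (V₀ 1 1) - V₀ 0 0) * (K * u))
      fun t ht ↦ ?_)
    have hrow := (row_one_of_mul_eq_conjTranspose_mul (hM t ht)).1
    push_cast at hrow ⊢
    linear_combination -hrow
  have hp₁₂ : K * (c₂₂ - 1 * u) ≠ K * (c₂₂ - 2 * u) := fun h ↦ by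
    linarith [mul_left_cancel₀ hK h]
  exact exists_eq_smul_one_of_mul_eq_conjTranspose_mul hV₀₁ (by exact_mod_cast hp₁₂)
    (hM 1 one_pos) (hM 2 two_pos)

/-- irreducibility of the weight from the case `|v| = |u|`: any
complex matrix `V₀` with `W(t) V₀ = V₀* W(t)` for all `t > 0` is scalar. -/
theorem vequ_weight_irreducible (u c₂₁ c₂₂ γ : ℝ)
    (hu : 0 < u) (hc₂₂ : 0 < c₂₂) (hγ : 0 < γ) (hc₂₁ : c₂₁ ≠ 0)
    (hne : c₂₂ ≠ c₂₁ * u) (hineq : 2 * c₂₁ * u / (c₂₂ - c₂₁ * u) < c₂₂)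
    (W : ℝ → Matrix (Fin 2) (Fin 2) ℂ)
    (hW : ∀ t : ℝ, W t =
      !![((Real.exp (-(t * u)) * t ^ (c₂₂ - 1) *
            (γ * t ^ (2 * c₂₁ * u / (c₂₁ * u - c₂₂)) +
              ((c₂₂ - c₂₁ * u) * (c₂₂ - t * u) / (2 * u * c₂₂)) ^ 2) : ℝ) : ℂ),
         ((Real.exp (-(t * u)) * t ^ (c₂₂ - 1) *
            ((c₂₂ - c₂₁ * u) * (c₂₂ - t * u) / (2 * u * c₂₂)) : ℝ) : ℂ);
         ((Real.exp (-(t * u)) * t ^ (c₂₂ - 1) *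
            ((c₂₂ - c₂₁ * u) * (c₂₂ - t * u) / (2 * u * c₂₂)) : ℝ) : ℂ),
         ((Real.exp (-(t * u)) * t ^ (c₂₂ - 1) : ℝ) : ℂ)])
    (V₀ : Matrix (Fin 2) (Fin 2) ℂ)
    (hV : ∀ t ∈ Set.Ioi (0 : ℝ), W t * V₀ = V₀ᴴ * W t) :
    ∃ c : ℂ, V₀ = c • (1 : Matrix (Fin 2) (Fin 2) ℂ) :=
  vequ_weight_irreducible_general u c₂₁ c₂₂ γ hu hc₂₂ hγ hne W hW V₀ hV
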